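/- arXiv:2208.13655 — 3 statements merged into one kernel-verified Lean document; each statement's English description precedes it below -/
import Mathlib

section
/- Let G be a group with elements σ₁, …, σ_j satisfying the braid relations, and let δ_j = σ_j σ_{j−1} ⋯ σ₁. Then for every t with 2 ≤ t ≤ j, δ_j^t = δ_{j−1} · δ_j^{t−1} · σ_{t−1}, where δ_{j−1} = σ_{j−1} ⋯ σ₁. -/
/-- `deltaB σ n = σ n * σ (n-1) * ... * σ 1` (with `deltaB σ 0 = 1`). -/
def deltaB {G : Type*} [Group G] (σ : ℕ → G) (n : ℕ) : G :=
  ((List.range n).map (fun i => σ (n - i))).prod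

/-- `gammaB σ n = σ 1 * σ 2 * ... * σ n` (with `gammaB σ 0 = 1`). -/
def gammaB {G : Type*} [Group G] (σ : ℕ → G) (n : ℕ) : G :=
  ((List.range n).map (fun i => σ (i + 1))).prod

/-- `ascB σ a c = σ a * σ (a+1) * ... * σ (a+c)`. -/
def ascB {G : Type*} [Group G] (σ : ℕ → G) (a c : ℕ) : G :=
  ((List.range (c + 1)).map (fun i => σ (a + i))).prod

lemma deltaB_succ {G : Type*} [Group G] (σ : ℕ → G) (n : ℕ) :
    deltaB σ (n + 1) = σ (n + 1) * deltaB σ n := by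
  simp [deltaB, List.range_succ_eq_map, List.map_map, Function.comp_def,
    Nat.succ_sub_succ]

lemma sigma_comm_deltaB {G : Type*} [Group G] (σ : ℕ → G) (j : ℕ)
    (hcomm : ∀ i j, 1 ≤ i → i + 1 < j → j ≤ j → σ i * σ j = σ j * σ i)
    (k : ℕ) : ∀ m, m + 1 < k → σ k * deltaB σ m = deltaB σ m * σ k := by
  intro m
  induction m with
  | zero => intro _; simp [deltaB]
  | succ n ih =>
    intro h
    rw [deltaB_succ, ← mul_assoc,
      (hcomm (n + 1) k (by omega) (by omega) le_rfl).symm, mul_assoc,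
      ih (by omega), ← mul_assoc]

lemma lemL {G : Type*} [Group G] (σ : ℕ → G) (j : ℕ)
    (hcomm : ∀ i j, 1 ≤ i → i + 1 < j → j ≤ j → σ i * σ j = σ j * σ i)
    (hbraid : ∀ i, 1 ≤ i → i + 1 ≤ j →
      σ i * σ (i + 1) * σ i = σ (i + 1) * σ i * σ (i + 1)) :
    ∀ n, n ≤ j → ∀ i, 1 ≤ i → i + 1 ≤ n →
      σ i * deltaB σ n = deltaB σ n * σ (i + 1) := by
  intro n
  induction n with
  | zero => omega
  | succ m ih =>
    intro hnj i hi him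
    rcases Nat.lt_or_ge (i + 1) (m + 1) with hlt | hge
    · rw [deltaB_succ, ← mul_assoc, hcomm i (m + 1) hi (by omega) le_rfl,
        mul_assoc, ih (by omega) i hi (by omega), ← mul_assoc]
    · -- i = m
      have hieq : i = m := by omega
      subst hieq
      obtain ⟨p, rfl⟩ : ∃ p, i = p + 1 := ⟨i - 1, by omega⟩
      rw [deltaB_succ, deltaB_succ]
      have hb := hbraid (p + 1) (by omega) (by omega)
      have hc := sigma_comm_deltaB σ j hcomm (p + 1 + 1) p (by omega)
      calc σ (p + 1) * (σ (p + 1 + 1) * (σ (p + 1) * deltaB σ p))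
          = (σ (p + 1) * σ (p + 1 + 1) * σ (p + 1)) * deltaB σ p := by
            group
        _ = (σ (p + 1 + 1) * σ (p + 1) * σ (p + 1 + 1)) * deltaB σ p := by
            rw [hb]
        _ = σ (p + 1 + 1) * σ (p + 1) * (σ (p + 1 + 1) * deltaB σ p) := by
            group
        _ = σ (p + 1 + 1) * σ (p + 1) * (deltaB σ p * σ (p + 1 + 1)) := by
            rw [hc]
        _ = σ (p + 1 + 1) * (σ (p + 1) * deltaB σ p) * σ (p + 1 + 1) := by
            group

lemma lemL2 {G : Type*} [Group G] (σ : ℕ → G) (j : ℕ)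
    (hcomm : ∀ i j, 1 ≤ i → i + 1 < j → j ≤ j → σ i * σ j = σ j * σ i)
    (hbraid : ∀ i, 1 ≤ i → i + 1 ≤ j →
      σ i * σ (i + 1) * σ i = σ (i + 1) * σ i * σ (i + 1)) :
    ∀ m, m + 1 ≤ j →
      deltaB σ m * deltaB σ j * σ 1 = deltaB σ j * deltaB σ (m + 1) := by
  intro m
  induction m with
  | zero => intro _; simp [deltaB, List.range_succ]
  | succ n ih =>
    intro h
    rw [deltaB_succ, deltaB_succ]
    calc σ (n + 1) * deltaB σ n * deltaB σ j * σ 1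
        = σ (n + 1) * (deltaB σ n * deltaB σ j * σ 1) := by group
      _ = σ (n + 1) * (deltaB σ j * deltaB σ (n + 1)) := by rw [ih (by omega)]
      _ = (σ (n + 1) * deltaB σ j) * deltaB σ (n + 1) := by group
      _ = (deltaB σ j * σ (n + 1 + 1)) * deltaB σ (n + 1) := by
          rw [lemL σ j hcomm hbraid j le_rfl (n + 1) (by omega) (by omega)]
      _ = deltaB σ j * (σ (n + 1 + 1) * deltaB σ (n + 1)) := by group

lemma lemP {G : Type*} [Group G] (σ : ℕ → G) (j : ℕ)
    (hcomm : ∀ i j, 1 ≤ i → i + 1 < j → j ≤ j → σ i * σ j = σ j * σ i)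
    (hbraid : ∀ i, 1 ≤ i → i + 1 ≤ j →
      σ i * σ (i + 1) * σ i = σ (i + 1) * σ i * σ (i + 1)) :
    ∀ s, s + 1 ≤ j →
      σ 1 * (deltaB σ j) ^ s = (deltaB σ j) ^ s * σ (s + 1) := by
  intro s
  induction s with
  | zero => simp
  | succ n ih =>
    intro h
    rw [pow_succ, ← mul_assoc, ih (by omega), mul_assoc,
      lemL σ j hcomm hbraid j le_rfl (n + 1) (by omega) (by omega), ← mul_assoc]

theorem stmt4 {G : Type*} [Group G] (σ : ℕ → G) (j : ℕ)
    (hcomm : ∀ i j, 1 ≤ i → i + 1 < j → j ≤ j → σ i * σ j = σ j * σ i)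
    (hbraid : ∀ i, 1 ≤ i → i + 1 ≤ j →
      σ i * σ (i + 1) * σ i = σ (i + 1) * σ i * σ (i + 1)) :
    ∀ t, 2 ≤ t → t ≤ j →
      (deltaB σ j) ^ t = deltaB σ (j - 1) * (deltaB σ j) ^ (t - 1) * σ (t - 1) := by
  intro t ht htj
  obtain ⟨s, rfl⟩ : ∃ s, t = s + 2 := ⟨t - 2, by omega⟩
  have hj : j - 1 + 1 = j := by omega
  have hbase := lemL2 σ j hcomm hbraid (j - 1) (by omega)
  rw [hj] at hbase
  have hP := lemP σ j hcomm hbraid s (by omega)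
  calc (deltaB σ j) ^ (s + 2)
      = (deltaB σ j * deltaB σ j) * (deltaB σ j) ^ s := by
        rw [← pow_two, ← pow_add]; ring_nf
    _ = (deltaB σ (j - 1) * deltaB σ j * σ 1) * (deltaB σ j) ^ s := by
        rw [hbase]
    _ = deltaB σ (j - 1) * deltaB σ j * (σ 1 * (deltaB σ j) ^ s) := by group
    _ = deltaB σ (j - 1) * deltaB σ j * ((deltaB σ j) ^ s * σ (s + 1)) := by
        rw [hP]
    _ = deltaB σ (j - 1) * (deltaB σ j * (deltaB σ j) ^ s) * σ (s + 1) := by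
        group
    _ = deltaB σ (j - 1) * (deltaB σ j) ^ (s + 2 - 1) * σ (s + 2 - 1) := by
        rw [← pow_succ']
        norm_num
end

section
/- Let G be a group with elements σ₁, …, σ_{w−1} satisfying the braid relations, and set γ = σ₁σ₂⋯σ_{w−1}. For integers a ≥ 2 and c ≥ 0 with a + c ≤ w − 1 and t ≥ 1, the elements α₁ = (σ_a σ_{a+1} ⋯ σ_{a+c}) · γ^t and α₂ = (σ_{a−1} σ_a ⋯ σ_{a+c−1}) · γ^t are conjugate in G; specifically, γ · α₂ · γ^{−1} = α₁. -/
lemma gammaB_succ {G : Type*} [Group G] (σ : ℕ → G) (n : ℕ) :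
    gammaB σ (n + 1) = gammaB σ n * σ (n + 1) := by
  simp [gammaB, List.range_succ]

lemma ascB_succ {G : Type*} [Group G] (σ : ℕ → G) (a c : ℕ) :
    ascB σ a (c + 1) = ascB σ a c * σ (a + (c + 1)) := by
  simp [ascB, List.range_succ, mul_assoc]

lemma comm_gammaB {G : Type*} [Group G] (σ : ℕ → G) (n : ℕ) (x : G)
    (h : ∀ j, 1 ≤ j → j ≤ n → σ j * x = x * σ j) :
    gammaB σ n * x = x * gammaB σ n := by
  induction n with
  | zero => simp [gammaB]
  | succ n ih =>
    calc gammaB σ (n + 1) * x = gammaB σ n * (σ (n + 1) * x) := by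
          rw [gammaB_succ, mul_assoc]
      _ = gammaB σ n * x * σ (n + 1) := by rw [h (n + 1) (by omega) le_rfl, mul_assoc]
      _ = x * gammaB σ (n + 1) := by
          rw [ih (fun j hj hj' => h j hj (by omega)), gammaB_succ, mul_assoc]

lemma shiftB {G : Type*} [Group G] (σ : ℕ → G) (w : ℕ)
    (hcomm : ∀ i j, 1 ≤ i → i + 1 < j → j ≤ w - 1 → σ i * σ j = σ j * σ i)
    (hbraid : ∀ i, 1 ≤ i → i + 1 ≤ w - 1 →
      σ i * σ (i + 1) * σ i = σ (i + 1) * σ i * σ (i + 1)) :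
    ∀ n i, 1 ≤ i → i + 1 ≤ n → n ≤ w - 1 →
      gammaB σ n * σ i = σ (i + 1) * gammaB σ n := by
  intro n
  induction n with
  | zero => omega
  | succ n ih =>
    intro i h1 h2 h3
    rcases Nat.lt_or_ge (i + 1) (n + 1) with hlt | hge
    · calc gammaB σ (n + 1) * σ i = gammaB σ n * (σ (n + 1) * σ i) := by
            rw [gammaB_succ, mul_assoc]
        _ = gammaB σ n * σ i * σ (n + 1) := by
            rw [← hcomm i (n + 1) h1 (by omega) (by omega), mul_assoc]
        _ = σ (i + 1) * gammaB σ n * σ (n + 1) := by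
            rw [ih i h1 (by omega) (by omega)]
        _ = σ (i + 1) * gammaB σ (n + 1) := by rw [gammaB_succ, mul_assoc]
    · have hin : i = n := by omega
      subst hin
      obtain ⟨m, rfl⟩ : ∃ m, i = m + 1 := ⟨i - 1, by omega⟩
      calc gammaB σ (m + 1 + 1) * σ (m + 1)
          = gammaB σ m * (σ (m + 1) * σ (m + 2) * σ (m + 1)) := by
            simp [gammaB_succ, mul_assoc]
        _ = gammaB σ m * (σ (m + 2) * (σ (m + 1) * σ (m + 2))) := by
            rw [hbraid (m + 1) (by omega) (by omega), mul_assoc]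
        _ = gammaB σ m * σ (m + 2) * (σ (m + 1) * σ (m + 2)) := by
            rw [mul_assoc]
        _ = σ (m + 2) * gammaB σ m * (σ (m + 1) * σ (m + 2)) := by
            rw [comm_gammaB σ m (σ (m + 2))
              (fun j hj hj' => hcomm j (m + 2) hj (by omega) (by omega))]
        _ = σ (m + 1 + 1) * gammaB σ (m + 1 + 1) := by
            simp [gammaB_succ, mul_assoc]

theorem stmt7 {G : Type*} [Group G] (σ : ℕ → G) (w a c t : ℕ)
    (ha : 2 ≤ a) (hac : a + c ≤ w - 1) (ht : 1 ≤ t)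
    (hcomm : ∀ i j, 1 ≤ i → i + 1 < j → j ≤ w - 1 → σ i * σ j = σ j * σ i)
    (hbraid : ∀ i, 1 ≤ i → i + 1 ≤ w - 1 →
      σ i * σ (i + 1) * σ i = σ (i + 1) * σ i * σ (i + 1)) :
    gammaB σ (w - 1) * (ascB σ (a - 1) c * (gammaB σ (w - 1)) ^ t) *
      (gammaB σ (w - 1))⁻¹ = ascB σ a c * (gammaB σ (w - 1)) ^ t := by
  have key : ∀ c', a + c' ≤ w - 1 →
      gammaB σ (w - 1) * ascB σ (a - 1) c' = ascB σ a c' * gammaB σ (w - 1) := by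
    intro c'
    induction c' with
    | zero =>
      intro h
      have h1 : ascB σ (a - 1) 0 = σ (a - 1) := by simp [ascB, List.range_succ]
      have h2 : ascB σ a 0 = σ a := by simp [ascB, List.range_succ]
      rw [h1, h2]
      have := shiftB σ w hcomm hbraid (w - 1) (a - 1) (by omega) (by omega) le_rfl
      rwa [show a - 1 + 1 = a by omega] at this
    | succ c' ih =>
      intro h
      have hs := shiftB σ w hcomm hbraid (w - 1) (a + c') (by omega) (by omega) le_rfl
      calc gammaB σ (w - 1) * ascB σ (a - 1) (c' + 1)
          = gammaB σ (w - 1) * ascB σ (a - 1) c' * σ (a + c') := by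
            rw [ascB_succ, show a - 1 + (c' + 1) = a + c' by omega, mul_assoc]
        _ = ascB σ a c' * (gammaB σ (w - 1) * σ (a + c')) := by
            rw [ih (by omega), mul_assoc]
        _ = ascB σ a c' * σ (a + c' + 1) * gammaB σ (w - 1) := by
            rw [hs, mul_assoc]
        _ = ascB σ a (c' + 1) * gammaB σ (w - 1) := by
            rw [ascB_succ, show a + (c' + 1) = a + c' + 1 by omega]
  have h := key c hac
  calc gammaB σ (w - 1) * (ascB σ (a - 1) c * (gammaB σ (w - 1)) ^ t) *
        (gammaB σ (w - 1))⁻¹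
      = (gammaB σ (w - 1) * ascB σ (a - 1) c) *
        ((gammaB σ (w - 1)) ^ t * (gammaB σ (w - 1))⁻¹) := by group
    _ = (ascB σ a c * gammaB σ (w - 1)) *
        ((gammaB σ (w - 1)) ^ t * (gammaB σ (w - 1))⁻¹) := by rw [h]
    _ = ascB σ a c * (gammaB σ (w - 1)) ^ t := by group
end

section
/- Let G be a group with elements σ₁, …, σ_k satisfying the braid relations and δ_k = σ_k ⋯ σ₁. Then for all j with 1 ≤ j ≤ k−1 and all s ≥ 1 with j + s ≤ k, σ_j · δ_k^s = δ_k^s · σ_{j+s}. -/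
lemma comm_deltaB {G : Type*} [Group G] (σ : ℕ → G) (k : ℕ)
    (hcomm : ∀ i j, 1 ≤ i → i + 1 < j → j ≤ k → σ i * σ j = σ j * σ i)
    (m : ℕ) (hmk : m ≤ k) :
    ∀ t, t + 1 < m → σ m * deltaB σ t = deltaB σ t * σ m := by
  intro t
  induction t with
  | zero => intro _; simp [deltaB]
  | succ t ih =>
    intro h
    rw [deltaB_succ, ← mul_assoc, ← hcomm (t + 1) m (by omega) h hmk,
      mul_assoc, ih (by omega), mul_assoc]

lemma step1 {G : Type*} [Group G] (σ : ℕ → G) (k : ℕ)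
    (hcomm : ∀ i j, 1 ≤ i → i + 1 < j → j ≤ k → σ i * σ j = σ j * σ i)
    (hbraid : ∀ i, 1 ≤ i → i + 1 ≤ k →
      σ i * σ (i + 1) * σ i = σ (i + 1) * σ i * σ (i + 1)) :
    ∀ n j, 1 ≤ j → j + 1 ≤ n → n ≤ k →
      σ j * deltaB σ n = deltaB σ n * σ (j + 1) := by
  intro n
  induction n with
  | zero => intro j _ h _; omega
  | succ n ih =>
    intro j hj hjn hnk
    rcases Nat.lt_or_ge (j + 1) (n + 1) with hlt | hge
    · rw [deltaB_succ, ← mul_assoc, hcomm j (n + 1) hj (by omega) hnk,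
        mul_assoc, ih j hj (by omega) (by omega), mul_assoc]
    · -- j = n, and n ≥ 1
      have hjn' : j = n := by omega
      subst hjn'
      obtain ⟨m, rfl⟩ : ∃ m, j = m + 1 := ⟨j - 1, by omega⟩
      rw [deltaB_succ, deltaB_succ]
      have hb := hbraid (m + 1) (by omega) (by omega)
      have hc := comm_deltaB σ k hcomm (m + 2) hnk m (by omega)
      calc σ (m + 1) * (σ (m + 2) * (σ (m + 1) * deltaB σ m))
          = (σ (m + 1) * σ (m + 2) * σ (m + 1)) * deltaB σ m := by
            group
        _ = (σ (m + 2) * σ (m + 1) * σ (m + 2)) * deltaB σ m := by rw [hb]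
        _ = σ (m + 2) * σ (m + 1) * (σ (m + 2) * deltaB σ m) := by group
        _ = σ (m + 2) * σ (m + 1) * (deltaB σ m * σ (m + 2)) := by rw [hc]
        _ = σ (m + 2) * (σ (m + 1) * deltaB σ m) * σ (m + 1 + 1) := by
            group

theorem stmt14 {G : Type*} [Group G] (σ : ℕ → G) (k : ℕ)
    (hcomm : ∀ i j, 1 ≤ i → i + 1 < j → j ≤ k → σ i * σ j = σ j * σ i)
    (hbraid : ∀ i, 1 ≤ i → i + 1 ≤ k →
      σ i * σ (i + 1) * σ i = σ (i + 1) * σ i * σ (i + 1)) :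
    ∀ j s, 1 ≤ j → 1 ≤ s → j + s ≤ k →
      σ j * (deltaB σ k) ^ s = (deltaB σ k) ^ s * σ (j + s) := by
  intro j s
  induction s generalizing j with
  | zero => intro _ h _; omega
  | succ s ih =>
    intro hj _ hjs
    rcases Nat.eq_zero_or_pos s with rfl | hs
    · simpa using step1 σ k hcomm hbraid k j hj (by omega) le_rfl
    · have h1 : σ j * deltaB σ k = deltaB σ k * σ (j + 1) :=
        step1 σ k hcomm hbraid k j hj (by omega) le_rfl
      have h2 := ih (j + 1) (by omega) hs (by omega)
      calc σ j * deltaB σ k ^ (s + 1)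
          = (σ j * deltaB σ k) * deltaB σ k ^ s := by
            rw [pow_succ']; group
        _ = deltaB σ k * (σ (j + 1) * deltaB σ k ^ s) := by rw [h1]; group
        _ = deltaB σ k * (deltaB σ k ^ s * σ (j + 1 + s)) := by rw [h2]
        _ = deltaB σ k ^ (s + 1) * σ (j + (s + 1)) := by
            have h3 : j + 1 + s = j + (s + 1) := by omega
            rw [h3, pow_succ', mul_assoc]
end
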